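/- Let C be a function from pairs of binary trees to the nonnegative reals satisfying C(leaf, h) = 0 and C(h, leaf) = 0 for all trees h, and for all internal trees h₁ = node(l₁, d₁, r₁) and h₂ = node(l₂, d₂, r₂): C(h₁, h₂) ≤ 1 + max( ½·C(l₂, h₁) + ½·C(r₂, h₁), ½·C(l₁, h₂) + ½·C(r₁, h₂) ). Then the expected cost of the insert operation of randomised meldable heaps, which melds a singleton node with the heap, satisfies C(node(leaf, d, leaf), h) ≤ log₂(|h|) + 1 for every binary tree h and every data element d. -/
import Mathlib


/-- Binary trees with data elements of type `α` at internal nodes. -/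
inductive BTree (α : Type) : Type
  | leaf : BTree α
  | node : BTree α → α → BTree α → BTree α

/-- The size of a tree is its number of leaves. -/
def BTree.size {α : Type} : BTree α → ℕ
  | .leaf => 1
  | .node l _ r => l.size + r.size

lemma BTree.one_le_size {α : Type} (t : BTree α) : 1 ≤ t.size := by
  induction t with
  | leaf => simp [BTree.size]
  | node l d r ihl ihr => simp [BTree.size]; omega

lemma half_log_add (a b : ℝ) (ha : 1 ≤ a) (hb : 1 ≤ b) :
    1 / 2 * Real.logb 2 a + 1 / 2 * Real.logb 2 b + 1 ≤ Real.logb 2 (a + b) := by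
  have ha0 : 0 < a := by linarith
  have hb0 : 0 < b := by linarith
  have hs : (0:ℝ) < Real.sqrt (a * b) := Real.sqrt_pos.2 (by positivity)
  have hle : 2 * Real.sqrt (a * b) ≤ a + b := by
    nlinarith [Real.sq_sqrt (by positivity : (0:ℝ) ≤ a * b), Real.sqrt_nonneg (a*b),
      sq_nonneg (Real.sqrt a - Real.sqrt b), sq_nonneg (a - b)]
  have h1 : Real.logb 2 (2 * Real.sqrt (a * b)) ≤ Real.logb 2 (a + b) :=
    Real.logb_le_logb_of_le (by norm_num) (by positivity) hle
  have h2 : Real.logb 2 (2 * Real.sqrt (a * b)) =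
      1 + (1 / 2 * Real.logb 2 a + 1 / 2 * Real.logb 2 b) := by
    rw [Real.logb_mul (by norm_num) (ne_of_gt hs), Real.logb_self_eq_one (by norm_num),
      Real.sqrt_eq_rpow, Real.logb_rpow_eq_mul_logb_of_pos (by positivity),
      Real.logb_mul (ne_of_gt ha0) (ne_of_gt hb0)]
    ring
  linarith

/-- Under the expected-cost recurrence of `meld` for randomised meldable heaps, the expected
cost of `insert`, which melds a singleton node with the heap, satisfies
`C (node leaf d leaf) h ≤ log₂ |h| + 1` for every tree `h` and data element `d`. -/
theorem insert_expected_cost_le_log {α : Type} (C : BTree α → BTree α → ℝ)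
    (hC0 : ∀ h₁ h₂ : BTree α, 0 ≤ C h₁ h₂)
    (hleafL : ∀ h : BTree α, C BTree.leaf h = 0)
    (hleafR : ∀ h : BTree α, C h BTree.leaf = 0)
    (hrec : ∀ (l₁ : BTree α) (d₁ : α) (r₁ : BTree α) (l₂ : BTree α) (d₂ : α) (r₂ : BTree α),
      C (BTree.node l₁ d₁ r₁) (BTree.node l₂ d₂ r₂) ≤
        1 + max ((1 / 2) * C l₂ (BTree.node l₁ d₁ r₁) + (1 / 2) * C r₂ (BTree.node l₁ d₁ r₁))
                ((1 / 2) * C l₁ (BTree.node l₂ d₂ r₂) + (1 / 2) * C r₁ (BTree.node l₂ d₂ r₂))) :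
    ∀ (h : BTree α) (d : α),
      C (BTree.node BTree.leaf d BTree.leaf) h ≤ Real.logb 2 (h.size : ℝ) + 1 := by
  intro h d
  suffices H : ∀ h : BTree α,
      C (BTree.node BTree.leaf d BTree.leaf) h ≤ Real.logb 2 (h.size : ℝ) + 1 ∧
      C h (BTree.node BTree.leaf d BTree.leaf) ≤ Real.logb 2 (h.size : ℝ) + 1 from (H h).1
  intro h
  induction h with
  | leaf =>
    constructor <;> simp [hleafL, hleafR, BTree.size]
  | node l d2 r ihl ihr =>
    have hsl : (1:ℝ) ≤ (l.size : ℝ) := by exact_mod_cast l.one_le_size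
    have hsr : (1:ℝ) ≤ (r.size : ℝ) := by exact_mod_cast r.one_le_size
    have hkey : 1 / 2 * Real.logb 2 (l.size : ℝ) + 1 / 2 * Real.logb 2 (r.size : ℝ) + 1 ≤
        Real.logb 2 ((BTree.node l d2 r).size : ℝ) := by
      have := half_log_add (l.size : ℝ) (r.size : ℝ) hsl hsr
      simpa [BTree.size] using this
    constructor
    · have h1 := hrec BTree.leaf d BTree.leaf l d2 r
      rw [hleafL] at h1
      have hmax : max ((1 / 2) * C l (BTree.node BTree.leaf d BTree.leaf) +
            (1 / 2) * C r (BTree.node BTree.leaf d BTree.leaf))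
            ((1 / 2) * 0 + (1 / 2) * 0) ≤
          1 / 2 * (Real.logb 2 (l.size : ℝ) + 1) + 1 / 2 * (Real.logb 2 (r.size : ℝ) + 1) := by
        apply max_le
        · have := ihl.2; have := ihr.2; nlinarith
        · have h0l : 0 ≤ Real.logb 2 (l.size:ℝ) := Real.logb_nonneg (by norm_num) hsl
          have h0r : 0 ≤ Real.logb 2 (r.size:ℝ) := Real.logb_nonneg (by norm_num) hsr
          nlinarith
      have := le_trans h1 (by linarith [hmax] : 1 + max ((1 / 2) * C l (BTree.node BTree.leaf d BTree.leaf) +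
            (1 / 2) * C r (BTree.node BTree.leaf d BTree.leaf))
            ((1 / 2) * 0 + (1 / 2) * 0) ≤
          1 + (1 / 2 * (Real.logb 2 (l.size : ℝ) + 1) + 1 / 2 * (Real.logb 2 (r.size : ℝ) + 1)))
      linarith
    · have h1 := hrec l d2 r BTree.leaf d BTree.leaf
      rw [hleafL] at h1
      have hmax : max ((1 / 2) * 0 + (1 / 2) * 0)
            ((1 / 2) * C l (BTree.node BTree.leaf d BTree.leaf) +
            (1 / 2) * C r (BTree.node BTree.leaf d BTree.leaf)) ≤
          1 / 2 * (Real.logb 2 (l.size : ℝ) + 1) + 1 / 2 * (Real.logb 2 (r.size : ℝ) + 1) := by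
        apply max_le
        · have h0l : 0 ≤ Real.logb 2 (l.size:ℝ) := Real.logb_nonneg (by norm_num) hsl
          have h0r : 0 ≤ Real.logb 2 (r.size:ℝ) := Real.logb_nonneg (by norm_num) hsr
          nlinarith
        · have := ihl.2; have := ihr.2; nlinarith
      linarith
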